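/- arXiv:1512.02978 — 2 statements merged into one kernel-verified Lean document; each statement's English description precedes it below -/
import Mathlib

section
/- For n ≥ 2m+2, h_n(m, m+2) ≤ ∑_{j=0}^{m} C(n−2j−2, m−j), where h_n(m,l) is the minimum width of a cutset in the truncated Boolean lattice B_n(m,l). -/
open Finset
open scoped Classical

/-- The truncated Boolean lattice `B_n(m,l)`: subsets of `[n] = {1,...,n}`
of size at least `m` and at most `l`. -/
def truncBool (n m l : ℕ) : Finset (Finset ℕ) :=
  (Finset.Icc 1 n).powerset.filter (fun A => m ≤ A.card ∧ A.card ≤ l)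

/-- `C` is a cutset of `B_n(m,l)`: it is contained in `B_n(m,l)` and meets every
saturated (maximal) chain `A_m ⊂ A_{m+1} ⊂ ⋯ ⊂ A_l` with `|A_i| = i`. -/
def IsCutset (n m l : ℕ) (C : Finset (Finset ℕ)) : Prop :=
  C ⊆ truncBool n m l ∧
  ∀ f : ℕ → Finset ℕ,
    (∀ i, m ≤ i → i ≤ l → f i ⊆ Finset.Icc 1 n ∧ (f i).card = i) →
    (∀ i, m ≤ i → i < l → f i ⊆ f (i + 1)) →
    ∃ i, m ≤ i ∧ i ≤ l ∧ f i ∈ C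

/-- The width of a family of sets: the maximum size of an antichain contained in it. -/
noncomputable def widthF (C : Finset (Finset ℕ)) : ℕ :=
  (C.powerset.filter (fun S : Finset (Finset ℕ) => IsAntichain (· ⊆ ·) (S : Set (Finset ℕ)))).sup
    Finset.card

/-- `hFun n m l` is the minimum width of a cutset in `B_n(m,l)`. -/
noncomputable def hFun (n m l : ℕ) : ℕ :=
  sInf {w | ∃ C : Finset (Finset ℕ), IsCutset n m l C ∧ widthF C = w}

/-!
Split the ground set `[c, n]` as `{c, c + 1} ∪ [c + 2, n]`. The sets `D ⊂ D ∪ {c} ⊂ D ∪ {c, c + 1}`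
with `D` an `(m + 1)`-subset of `[c + 2, n]` form `C(n - c - 1, m + 1)` chains, so they contribute
at most that much to any antichain. A saturated chain from level `m + 1` to `m + 3` avoiding all of
them contains `c + 1` but not `c`; deleting `c + 1` leaves a saturated chain from level `m` to
`m + 2` on `[c + 2, n]`, which is met by the same construction one step down, lifted by
`insert (c + 1)`.
-/

lemma widthF_le {C : Finset (Finset ℕ)} {w : ℕ}
    (h : ∀ T ⊆ C, IsAntichain (· ⊆ ·) (T : Set (Finset ℕ)) → #T ≤ w) : widthF C ≤ w :=
  Finset.sup_le fun T hT => by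
    rw [mem_filter, mem_powerset] at hT
    exact h T hT.1 hT.2

lemma card_le_widthF {C T : Finset (Finset ℕ)} (hT : T ⊆ C)
    (hA : IsAntichain (· ⊆ ·) (T : Set (Finset ℕ))) : #T ≤ widthF C :=
  Finset.le_sup (f := Finset.card) (by rw [mem_filter, mem_powerset]; exact ⟨hT, hA⟩)

lemma widthF_union_le (C D : Finset (Finset ℕ)) : widthF (C ∪ D) ≤ widthF C + widthF D :=
  widthF_le fun T hT hA => by
    have hsplit : T = T ∩ C ∪ T ∩ D := by rw [← inter_union_distrib_left, inter_eq_left.2 hT]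
    calc #T = #(T ∩ C ∪ T ∩ D) := congrArg card hsplit
      _ ≤ #(T ∩ C) + #(T ∩ D) := card_union_le _ _
      _ ≤ widthF C + widthF D := by
        gcongr <;> exact card_le_widthF inter_subset_right (hA.subset (by simp))

lemma widthF_le_one_of_isChain {C : Finset (Finset ℕ)} (hC : IsChain (· ⊆ ·) (C : Set (Finset ℕ))) :
    widthF C ≤ 1 :=
  widthF_le fun T hT hA => card_le_one.2 fun A hA' B hB' => by
    by_contra hne
    rcases hC (hT hA') (hT hB') hne with hAB | hBA
    · exact hA hA' hB' hne hAB
    · exact hA hB' hA' (Ne.symm hne) hBA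

lemma widthF_biUnion_le {ι : Type*} (S : Finset ι) (c : ι → Finset (Finset ℕ)) :
    widthF (S.biUnion c) ≤ ∑ i ∈ S, widthF (c i) := by
  induction S using Finset.induction_on with
  | empty => exact widthF_le fun T hT _ => by simp [subset_empty.1 hT]
  | insert i S hi ih =>
    rw [biUnion_insert, sum_insert hi]
    exact (widthF_union_le _ _).trans (by gcongr)

lemma widthF_biUnion_le_card {ι : Type*} (S : Finset ι) (c : ι → Finset (Finset ℕ))
    (hc : ∀ i ∈ S, IsChain (· ⊆ ·) (c i : Set (Finset ℕ))) : widthF (S.biUnion c) ≤ #S :=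
  calc widthF (S.biUnion c) ≤ ∑ i ∈ S, widthF (c i) := widthF_biUnion_le S c
    _ ≤ ∑ _i ∈ S, 1 := sum_le_sum fun i hi => widthF_le_one_of_isChain (hc i hi)
    _ = #S := by simp

lemma widthF_image_le (C : Finset (Finset ℕ)) {g : Finset ℕ → Finset ℕ} (hg : Monotone g) :
    widthF (C.image g) ≤ widthF C :=
  widthF_le fun T hT hA => by
    obtain ⟨U, hUC, hinj, rfl⟩ :=
      exists_subset_injOn_image_eq_of_surjOn (C : Set (Finset ℕ)) T fun B hB => by simpa using hT hB
    rw [card_image_of_injOn hinj]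
    refine card_le_widthF (mod_cast hUC) fun A hA' B hB' hne hAB => ?_
    exact hA (mem_image_of_mem g hA') (mem_image_of_mem g hB') (fun h => hne (hinj hA' hB' h))
      (hg hAB)

lemma hFun_le_widthF {n m l : ℕ} {C : Finset (Finset ℕ)} (hC : IsCutset n m l C) :
    hFun n m l ≤ widthF C :=
  Nat.sInf_le ⟨C, hC, rfl⟩

lemma subset_Icc_succ_of_notMem {A : Finset ℕ} {c n : ℕ} (hA : A ⊆ Icc c n) (hc : c ∉ A) :
    A ⊆ Icc (c + 1) n := fun x hx => by
  have := hA hx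
  rw [mem_Icc] at this ⊢
  have : x ≠ c := fun h => hc (h ▸ hx)
  omega

lemma notMem_of_subset_Icc_of_lt {A : Finset ℕ} {a n x : ℕ} (hA : A ⊆ Icc a n) (hx : x < a) :
    x ∉ A := fun h => by
  have := hA h
  rw [mem_Icc] at this
  omega

lemma erase_subset_Icc_succ {A : Finset ℕ} {c n : ℕ} (hA : A ⊆ Icc c n) :
    A.erase c ⊆ Icc (c + 1) n :=
  subset_Icc_succ_of_notMem ((erase_subset c A).trans hA) (notMem_erase c A)

/-- A cutset of the levels `m, m + 1, m + 2` of the Boolean lattice on the ground set `[c, n]`. -/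
def narrowCutset (c n : ℕ) : ℕ → Finset (Finset ℕ)
  | 0 => {∅}
  | m + 1 =>
    ((Icc (c + 2) n).powersetCard (m + 1)).biUnion
        (fun D => {D, insert c D, insert (c + 1) (insert c D)}) ∪
      (narrowCutset (c + 2) n m).image (insert (c + 1))

lemma mem_narrowCutset_succ {c n m : ℕ} {A : Finset ℕ} :
    A ∈ narrowCutset c n (m + 1) ↔
      (∃ D ⊆ Icc (c + 2) n, #D = m + 1 ∧
        (A = D ∨ A = insert c D ∨ A = insert (c + 1) (insert c D))) ∨
      ∃ B ∈ narrowCutset (c + 2) n m, insert (c + 1) B = A := by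
  simp [narrowCutset, and_assoc]

lemma subset_Icc_of_mem_narrowCutset {c n m : ℕ} (hn : c + 2 * m ≤ n) {A : Finset ℕ}
    (hA : A ∈ narrowCutset c n m) : A ⊆ Icc c n ∧ m ≤ #A ∧ #A ≤ m + 2 := by
  induction m generalizing c A with
  | zero => simp_all [narrowCutset]
  | succ m ih =>
    have hIcc : Icc (c + 2) n ⊆ Icc c n := Icc_subset_Icc (by omega) le_rfl
    have hc : c ∈ Icc c n := by simp; omega
    have hc' : c + 1 ∈ Icc c n := by simp; omega
    rcases mem_narrowCutset_succ.1 hA with ⟨D, hD, hDcard, rfl | rfl | rfl⟩ | ⟨B, hB, rfl⟩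
    · exact ⟨hD.trans hIcc, by omega, by omega⟩
    · rw [card_insert_of_notMem (notMem_of_subset_Icc_of_lt hD (by omega))]
      exact ⟨insert_subset hc (hD.trans hIcc), by omega, by omega⟩
    · have hcD : c ∉ D := notMem_of_subset_Icc_of_lt hD (by omega)
      have hc'D : c + 1 ∉ insert c D := by
        simp [notMem_of_subset_Icc_of_lt hD (show c + 1 < c + 2 by omega)]
      rw [card_insert_of_notMem hc'D, card_insert_of_notMem hcD]
      exact ⟨insert_subset hc' (insert_subset hc (hD.trans hIcc)), by omega, by omega⟩
    · obtain ⟨hBsub, hBlo, hBhi⟩ := ih (by omega) hB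
      rw [card_insert_of_notMem (notMem_of_subset_Icc_of_lt hBsub (by omega))]
      exact ⟨insert_subset hc' (hBsub.trans hIcc), by omega, by omega⟩

section Membership

variable {c n m : ℕ} {A : Finset ℕ}

lemma mem_narrowCutset_succ_of_notMem_of_notMem (hA : A ⊆ Icc c n) (hc : c ∉ A) (hc' : c + 1 ∉ A)
    (h : #A = m + 1) : A ∈ narrowCutset c n (m + 1) :=
  mem_narrowCutset_succ.2 <| .inl
    ⟨A, subset_Icc_succ_of_notMem (subset_Icc_succ_of_notMem hA hc) hc', h, .inl rfl⟩

lemma mem_narrowCutset_succ_of_mem_of_notMem (hA : A ⊆ Icc c n) (hc : c ∈ A) (hc' : c + 1 ∉ A)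
    (h : #A = m + 2) : A ∈ narrowCutset c n (m + 1) :=
  mem_narrowCutset_succ.2 <| .inl
    ⟨A.erase c,
      subset_Icc_succ_of_notMem (erase_subset_Icc_succ hA) (fun h' => hc' (mem_of_mem_erase h')),
      by rw [card_erase_of_mem hc, h]; rfl, .inr (.inl (insert_erase hc).symm)⟩

lemma mem_narrowCutset_succ_of_mem_of_mem (hA : A ⊆ Icc c n) (hc : c ∈ A) (hc' : c + 1 ∈ A)
    (h : #A = m + 3) : A ∈ narrowCutset c n (m + 1) := by
  have hcA' : c ∈ A.erase (c + 1) := mem_erase.2 ⟨by omega, hc⟩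
  refine mem_narrowCutset_succ.2 <| .inl ⟨(A.erase (c + 1)).erase c, ?_, ?_, ?_⟩
  · refine subset_Icc_succ_of_notMem (erase_subset_Icc_succ ((erase_subset _ _).trans hA)) ?_
    exact fun h' => notMem_erase (c + 1) A (mem_of_mem_erase h')
  · rw [card_erase_of_mem hcA', card_erase_of_mem hc', h]; rfl
  · rw [insert_erase hcA', insert_erase hc']
    exact .inr (.inr rfl)

lemma insert_mem_narrowCutset_succ (hA : A ∈ narrowCutset (c + 2) n m) :
    insert (c + 1) A ∈ narrowCutset c n (m + 1) :=
  mem_narrowCutset_succ.2 <| .inr ⟨A, hA, rfl⟩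

end Membership

lemma exists_mem_narrowCutset (c n m : ℕ) (f : ℕ → Finset ℕ)
    (hf : ∀ i, m ≤ i → i ≤ m + 2 → f i ⊆ Icc c n ∧ #(f i) = i)
    (hmono : ∀ i, m ≤ i → i < m + 2 → f i ⊆ f (i + 1)) :
    ∃ i, m ≤ i ∧ i ≤ m + 2 ∧ f i ∈ narrowCutset c n m := by
  induction m generalizing c f with
  | zero =>
    exact ⟨0, le_rfl, by omega, by simp [narrowCutset, card_eq_zero.1 (hf 0 le_rfl (by omega)).2]⟩
  | succ m ih =>
    have h12 := hmono (m + 1) le_rfl (by omega)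
    have h23 := hmono (m + 2) (by omega) (by omega)
    have hf1 := hf (m + 1) le_rfl (by omega)
    have hf2 := hf (m + 2) (by omega) (by omega)
    have hf3 := hf (m + 3) (by omega) (by omega)
    by_cases hc : c ∈ f (m + 1)
    · by_cases hc' : c + 1 ∈ f (m + 2)
      · exact ⟨m + 3, by omega, le_rfl,
          mem_narrowCutset_succ_of_mem_of_mem hf3.1 (h23 (h12 hc)) (h23 hc') hf3.2⟩
      · exact ⟨m + 2, by omega, by omega,
          mem_narrowCutset_succ_of_mem_of_notMem hf2.1 (h12 hc) hc' hf2.2⟩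
    by_cases hc' : c + 1 ∈ f (m + 1)
    swap
    · exact ⟨m + 1, le_rfl, by omega, mem_narrowCutset_succ_of_notMem_of_notMem hf1.1 hc hc' hf1.2⟩
    by_cases hc3 : c ∈ f (m + 3)
    · exact ⟨m + 3, by omega, le_rfl,
        mem_narrowCutset_succ_of_mem_of_mem hf3.1 hc3 (h23 (h12 hc')) hf3.2⟩
    -- from level `m + 1` on the chain contains `c + 1` and avoids `c`
    have hbetween : ∀ i, m ≤ i → i ≤ m + 2 → f (m + 1) ⊆ f (i + 1) ∧ f (i + 1) ⊆ f (m + 3) := by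
      intro i hi hi'
      obtain rfl | rfl | rfl : i = m ∨ i = m + 1 ∨ i = m + 2 := by omega
      · exact ⟨le_rfl, h12.trans h23⟩
      · exact ⟨h12, h23⟩
      · exact ⟨h12.trans h23, le_rfl⟩
    obtain ⟨i, hi, hi', hmem⟩ := ih (c + 2) (fun i => (f (i + 1)).erase (c + 1))
      (fun i hi hi' => by
        obtain ⟨hsub, hcard⟩ := hf (i + 1) (by omega) (by omega)
        refine ⟨erase_subset_Icc_succ (subset_Icc_succ_of_notMem hsub ?_), ?_⟩
        · exact fun h => hc3 ((hbetween i hi hi').2 h)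
        · rw [card_erase_of_mem ((hbetween i hi hi').1 hc'), hcard]; rfl)
      (fun i hi hi' => erase_subset_erase _ (hmono (i + 1) (by omega) (by omega)))
    refine ⟨i + 1, by omega, by omega, ?_⟩
    rw [← insert_erase ((hbetween i hi hi').1 hc')]
    exact insert_mem_narrowCutset_succ hmem

lemma isChain_triple (D : Finset ℕ) (a b : ℕ) :
    IsChain (· ⊆ ·)
      (({D, insert a D, insert b (insert a D)} : Finset (Finset ℕ)) : Set (Finset ℕ)) := by
  rw [coe_insert, coe_pair]
  refine (IsChain.pair (subset_insert b _)).insert fun B hB _ => .inl ?_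
  rcases hB with rfl | rfl
  · exact subset_insert a D
  · exact (subset_insert a D).trans (subset_insert b _)

lemma widthF_narrowCutset_le (c n m : ℕ) :
    widthF (narrowCutset c n m) ≤ ∑ j ∈ range (m + 1), (n - c - 1 - 2 * j).choose (m - j) := by
  induction m generalizing c with
  | zero => simpa [narrowCutset] using widthF_le_one_of_isChain (C := {∅}) (by simp)
  | succ m ih =>
    calc widthF (narrowCutset c n (m + 1))
        ≤ #((Icc (c + 2) n).powersetCard (m + 1)) + widthF (narrowCutset (c + 2) n m) :=
          (widthF_union_le _ _).trans <| add_le_add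
            (widthF_biUnion_le_card _ _ fun D _ => isChain_triple D _ _)
            (widthF_image_le _ fun _ _ => insert_subset_insert (c + 1))
      _ ≤ (n - c - 1).choose (m + 1) +
            ∑ j ∈ range (m + 1), (n - (c + 2) - 1 - 2 * j).choose (m - j) := by
          rw [card_powersetCard, Nat.card_Icc, show n + 1 - (c + 2) = n - c - 1 by omega]
          exact Nat.add_le_add_left (ih (c + 2)) _
      _ = ∑ j ∈ range (m + 2), (n - c - 1 - 2 * j).choose (m + 1 - j) := by
          rw [sum_range_succ' _ (m + 1), add_comm]
          congr 1
          exact sum_congr rfl fun j _ => by congr 1 <;> omega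

lemma isCutset_narrowCutset {n m : ℕ} (hn : 1 + 2 * m ≤ n) :
    IsCutset n m (m + 2) (narrowCutset 1 n m) :=
  ⟨fun _ hA => by
    obtain ⟨hsub, hlo, hhi⟩ := subset_Icc_of_mem_narrowCutset hn hA
    exact mem_filter.2 ⟨mem_powerset.2 hsub, hlo, hhi⟩,
  exists_mem_narrowCutset 1 n m⟩

theorem stmt_9 (n m : ℕ) (h : 2 * m + 2 ≤ n) :
    hFun n m (m + 2) ≤ ∑ j ∈ Finset.range (m + 1), (n - 2 * j - 2).choose (m - j) := by
  calc hFun n m (m + 2) ≤ widthF (narrowCutset 1 n m) :=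
        hFun_le_widthF (isCutset_narrowCutset (by omega))
    _ ≤ _ := widthF_narrowCutset_le 1 n m
    _ = _ := sum_congr rfl fun j _ => by rw [show n - 1 - 1 - 2 * j = n - 2 * j - 2 by omega]
end

section
/- For nonnegative integers n, m, l with 2m ≤ l ≤ n−m, every cutset of B_n(m, 2m) extends to a cutset of B_n(m, l) of the same width; hence h_n(m, l) ≤ h_n(m, 2m). -/
open Finset
open scoped Classical

theorem mem_truncBool {n m l : ℕ} {A : Finset ℕ} :
    A ∈ truncBool n m l ↔ A ⊆ Icc 1 n ∧ m ≤ A.card ∧ A.card ≤ l := by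
  simp only [truncBool, mem_filter, mem_powerset]

theorem truncBool_mono_right {n m l l' : ℕ} (hl : l ≤ l') :
    truncBool n m l ⊆ truncBool n m l' := fun _ hA =>
  let ⟨hsub, hm, hcard⟩ := mem_truncBool.1 hA
  mem_truncBool.2 ⟨hsub, hm, hcard.trans hl⟩

/-- A saturated chain of `B_n(m,l')` restricts to one of `B_n(m,l)`. -/
theorem IsCutset.mono_right {n m l l' : ℕ} {C : Finset (Finset ℕ)} (hC : IsCutset n m l C)
    (hl : l ≤ l') : IsCutset n m l' C := by
  refine ⟨hC.1.trans (truncBool_mono_right hl), fun f hf hchain => ?_⟩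
  obtain ⟨i, hmi, hil, hfi⟩ := hC.2 f (fun i hm hi => hf i hm (hi.trans hl))
    (fun i hm hi => hchain i hm (hi.trans_le hl))
  exact ⟨i, hmi, hil.trans hl, hfi⟩

theorem isCutset_truncBool {n m l : ℕ} (hml : m ≤ l) : IsCutset n m l (truncBool n m l) := by
  refine ⟨subset_rfl, fun f hf _ => ⟨m, le_rfl, hml, ?_⟩⟩
  obtain ⟨hsub, hcard⟩ := hf m le_rfl hml
  exact mem_truncBool.2 ⟨hsub, hcard.ge, hcard.le.trans hml⟩

theorem exists_isCutset_widthF_eq_hFun {n m l : ℕ} (hml : m ≤ l) :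
    ∃ C, IsCutset n m l C ∧ widthF C = hFun n m l :=
  Nat.sInf_mem (s := {w | ∃ C, IsCutset n m l C ∧ widthF C = w})
    ⟨_, truncBool n m l, isCutset_truncBool hml, rfl⟩

theorem hFun_antitone_right {n m l l' : ℕ} (hml : m ≤ l) (hl : l ≤ l') :
    hFun n m l' ≤ hFun n m l := by
  obtain ⟨C, hC, hw⟩ := exists_isCutset_widthF_eq_hFun (n := n) hml
  exact Nat.sInf_le ⟨C, hC.mono_right hl, hw⟩

theorem stmt_14_general (n m l : ℕ) (h1 : 2 * m ≤ l) :
    (∀ C : Finset (Finset ℕ), IsCutset n m (2 * m) C → IsCutset n m l C) ∧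
    hFun n m l ≤ hFun n m (2 * m) :=
  ⟨fun _ hC => hC.mono_right h1, hFun_antitone_right (by omega) h1⟩

theorem stmt_14 (n m l : ℕ) (h1 : 2 * m ≤ l) (h2 : l ≤ n - m) :
    (∀ C : Finset (Finset ℕ), IsCutset n m (2 * m) C → IsCutset n m l C) ∧
    hFun n m l ≤ hFun n m (2 * m) :=
  stmt_14_general n m l h1
end
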